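/- arXiv:2409.14359 — 5 statements merged into one kernel-verified Lean document; each statement's English description precedes it below -/
import Mathlib

section
/- Let i = (i_k) be a sequence in an index set I over an interval S of integers. If two i-boxes [x,y] and [x',y'] of the same color commute, then either [x,y] ⊆ [x',y'] or [x',y'] ⊆ [x,y]. -/
namespace IBoxes

variable {I : Type*}

/-- `gapBelow i x m` encodes `x₋ < m` : no position `t` with `m ≤ t < x` has the color of `x`. -/
def gapBelow (i : ℤ → I) (x m : ℤ) : Prop := ∀ t : ℤ, m ≤ t → t < x → i t ≠ i x

/-- `gapAbove i y m` encodes `m < y₊` : no position `t` with `y < t ≤ m` has the color of `y`. -/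
def gapAbove (i : ℤ → I) (y m : ℤ) : Prop := ∀ t : ℤ, y < t → t ≤ m → i t ≠ i y

/-- `[x,y]` is an `i`-box. -/
def IsBox (i : ℤ → I) (x y : ℤ) : Prop := x ≤ y ∧ i x = i y

/-- Two `i`-boxes commute: `(x₁)₋ < x₂ ≤ y₂ < (y₁)₊` or `(x₂)₋ < x₁ ≤ y₁ < (y₂)₊`. -/
def BoxCommute (i : ℤ → I) (x₁ y₁ x₂ y₂ : ℤ) : Prop :=
  (gapBelow i x₁ x₂ ∧ gapAbove i y₁ y₂) ∨ (gapBelow i x₂ x₁ ∧ gapAbove i y₂ y₁)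

/-- A commuting family of `i`-boxes. -/
def CommFamily (i : ℤ → I) (F : Set (ℤ × ℤ)) : Prop :=
  (∀ p ∈ F, IsBox i p.1 p.2) ∧ ∀ p ∈ F, ∀ q ∈ F, BoxCommute i p.1 p.2 q.1 q.2

/-- All boxes of the family lie in `[a,b]`. -/
def InRange (a b : ℤ) (F : Set (ℤ × ℤ)) : Prop := ∀ p ∈ F, a ≤ p.1 ∧ p.2 ≤ b

/-- A maximal commuting family of `i`-boxes in `[a,b]`. -/
def MaxCommFamily (i : ℤ → I) (a b : ℤ) (F : Set (ℤ × ℤ)) : Prop :=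
  CommFamily i F ∧ InRange a b F ∧
    ∀ G : Set (ℤ × ℤ), CommFamily i G → InRange a b G → F ⊆ G → F = G

/-- `x' = x₊`, the next position with the color of `x`. -/
def NextSame (i : ℤ → I) (x x' : ℤ) : Prop :=
  x < x' ∧ i x' = i x ∧ ∀ t : ℤ, x < t → t < x' → i t ≠ i x

/-- `y' = y₋`, the previous position with the color of `y`. -/
def PrevSame (i : ℤ → I) (y y' : ℤ) : Prop :=
  y' < y ∧ i y' = i y ∧ ∀ t : ℤ, y' < t → t < y → i t ≠ i y

/-- `p` is frozen in `[a,b]` : `(p.1)₋ < a` and `b < (p.2)₊`. -/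
def Frozen (i : ℤ → I) (a b : ℤ) (p : ℤ × ℤ) : Prop :=
  gapBelow i p.1 a ∧ gapAbove i p.2 b

/-- `p = [lo, hi}`, i.e. `p = [lo, hi(i lo)⁻]`. -/
def IsLBox (i : ℤ → I) (lo hi : ℤ) (p : ℤ × ℤ) : Prop :=
  p.1 = lo ∧ lo ≤ p.2 ∧ p.2 ≤ hi ∧ i p.2 = i lo ∧ ∀ t : ℤ, p.2 < t → t ≤ hi → i t ≠ i lo

/-- `p = {lo, hi]`, i.e. `p = [lo(i hi)⁺, hi]`. -/
def IsRBox (i : ℤ → I) (lo hi : ℤ) (p : ℤ × ℤ) : Prop :=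
  p.2 = hi ∧ lo ≤ p.1 ∧ p.1 ≤ hi ∧ i p.1 = i hi ∧ ∀ t : ℤ, lo ≤ t → t < p.1 → i t ≠ i hi

/-- An admissible chain of `i`-boxes `𝔠_k = box k` (for `1 ≤ k ≤ l`) with envelopes
`𝔠̃_k = [lo k, hi k]`. -/
structure AdmissibleChain (i : ℤ → I) (l : ℕ) where
  lo : ℕ → ℤ
  hi : ℕ → ℤ
  box : ℕ → ℤ × ℤ
  size : ∀ k : ℕ, 1 ≤ k → k ≤ l → hi k = lo k + (k : ℤ) - 1
  step : ∀ k : ℕ, 1 ≤ k → k < l →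
    (lo (k + 1) = lo k - 1 ∧ hi (k + 1) = hi k) ∨
    (lo (k + 1) = lo k ∧ hi (k + 1) = hi k + 1)
  box_spec : ∀ k : ℕ, 1 ≤ k → k ≤ l →
    IsLBox i (lo k) (hi k) (box k) ∨ IsRBox i (lo k) (hi k) (box k)
  cover : ∀ k : ℕ, 1 ≤ k → k ≤ l →
    Set.Icc (lo k) (hi k) = ⋃ j ∈ Set.Icc 1 k, Set.Icc ((box j).1) ((box j).2)

/-- The set of boxes appearing in an admissible chain. -/
def boxesOf {i : ℤ → I} {l : ℕ} (C : AdmissibleChain i l) : Set (ℤ × ℤ) :=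
  {p | ∃ k : ℕ, 1 ≤ k ∧ k ≤ l ∧ C.box k = p}

/-- The envelope `𝔠̃_k` as a set, with `𝔠̃_0 = ∅`. -/
def env {i : ℤ → I} {l : ℕ} (C : AdmissibleChain i l) (k : ℕ) : Set ℤ :=
  if k = 0 then ∅ else Set.Icc (C.lo k) (C.hi k)

/-- `z` is the effective end of the box `(x,y)` of the maximal commuting family `F` in `[a,b]`. -/
def IsEffectiveEnd (i : ℤ → I) (a b : ℤ) (F : Set (ℤ × ℤ)) (x y z : ℤ) : Prop :=
  z ∈ ({x, y} : Set ℤ) ∧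
    ∀ (l : ℕ) (C : AdmissibleChain i l), C.lo l = a → C.hi l = b → boxesOf C = F →
      ∀ k : ℕ, 1 ≤ k → k ≤ l → C.box k = (x, y) →
        ({z} : Set ℤ) = env C k \ env C (k - 1)

/-- `[x,y]` is in the left corner of `F`: `[x₊,y] ∈ F` and `[x,y₊] ∈ F`. -/
def LeftCorner (i : ℤ → I) (F : Set (ℤ × ℤ)) (x y : ℤ) : Prop :=
  (∃ x', NextSame i x x' ∧ (x', y) ∈ F) ∧ (∃ y', NextSame i y y' ∧ (x, y') ∈ F)

/-- `[x,y]` is in the right corner of `F`: `[x,y₋] ∈ F` and `[x₋,y] ∈ F`. -/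
def RightCorner (i : ℤ → I) (F : Set (ℤ × ℤ)) (x y : ℤ) : Prop :=
  (∃ y', PrevSame i y y' ∧ (x, y') ∈ F) ∧ (∃ x', PrevSame i x x' ∧ (x', y) ∈ F)

/-- The number of positions of color `j` in `[x,y]`. -/
noncomputable def colorCount (i : ℤ → I) (j : I) (x y : ℤ) : ℕ :=
  {s : ℤ | x ≤ s ∧ s ≤ y ∧ i s = j}.ncard

/-- Two commuting `i`-boxes of the same color are nested. -/
theorem same_color_commute_nested (i : ℤ → I) (x y x' y' : ℤ)
    (hb : IsBox i x y) (hb' : IsBox i x' y') (hcol : i x = i x')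
    (hc : BoxCommute i x y x' y') :
    (x' ≤ x ∧ y ≤ y') ∨ (x ≤ x' ∧ y' ≤ y) := by
  obtain ⟨hxy, hixy⟩ := hb
  obtain ⟨hxy', hixy'⟩ := hb'
  rcases hc with ⟨hgb, hga⟩ | ⟨hgb, hga⟩
  · right
    refine ⟨?_, ?_⟩
    · by_contra h
      exact hgb x' le_rfl (by omega) hcol.symm
    · by_contra h
      exact hga y' (by omega) le_rfl (hixy'.symm.trans (hcol.symm.trans hixy))
  · left
    refine ⟨?_, ?_⟩
    · by_contra h
      exact hgb x le_rfl (by omega) hcol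
    · by_contra h
      exact hga y (by omega) le_rfl (hixy.symm.trans (hcol.trans hixy'))

end IBoxes
end

section
/- Let 𝔉 be a commuting family of i-boxes and let s ≤ t be integers. Then either the set {y : [s,y] ∈ 𝔉, y ≤ t} has at most one element, or the set {x : [x,t] ∈ 𝔉, s ≤ x} has at most one element. -/
namespace IBoxes

variable {I : Type*}

/- Two boxes `[s,y₁], [s,y₂]` with `y₁ < y₂ ≤ t` and two boxes `[x₁,t], [x₂,t]` with
`s ≤ x₁ < x₂` cannot coexist in a commuting family: `[s,y₁]` and `[x₂,t]` fail to commute,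
since `y₂` witnesses `t ≥ (y₁)₊` and `x₁` witnesses `s ≤ (x₂)₋`. -/

theorem not_boxCommute_of_interleaved {i : ℤ → I} {s t x₁ x₂ y₁ y₂ : ℤ}
    (hy : y₁ < y₂) (hyt : y₂ ≤ t) (hcy : i y₂ = i y₁)
    (hx : x₁ < x₂) (hsx : s ≤ x₁) (hcx : i x₁ = i x₂) :
    ¬ BoxCommute i s y₁ x₂ t := by
  rintro (⟨-, habove⟩ | ⟨hbelow, -⟩)
  · exact habove y₂ hy hyt hcy
  · exact hbelow x₁ hsx hx hcx

theorem fourboxes_general (i : ℤ → I) (F : Set (ℤ × ℤ)) (hF : CommFamily i F)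
    (s t : ℤ) :
    {y : ℤ | (s, y) ∈ F ∧ y ≤ t}.Subsingleton ∨
    {x : ℤ | (x, t) ∈ F ∧ s ≤ x}.Subsingleton := by
  by_contra! h
  obtain ⟨y₁, ⟨hy₁, -⟩, y₂, ⟨hy₂, hy₂t⟩, hy⟩ := h.1.exists_lt
  obtain ⟨x₁, ⟨hx₁, hsx₁⟩, x₂, ⟨hx₂, -⟩, hx⟩ := h.2.exists_lt
  obtain ⟨hbox, hcomm⟩ := hF
  have hcy : i y₂ = i y₁ := (hbox _ hy₂).2.symm.trans (hbox _ hy₁).2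
  have hcx : i x₁ = i x₂ := (hbox _ hx₁).2.trans (hbox _ hx₂).2.symm
  exact not_boxCommute_of_interleaved hy hy₂t hcy hx hsx₁ hcx (hcomm _ hy₁ _ hx₂)

/-- For a commuting family `F` and `s ≤ t`, either at most one box of `F` has left end `s`
and right end `≤ t`, or at most one box of `F` has right end `t` and left end `≥ s`. -/
theorem fourboxes (i : ℤ → I) (F : Set (ℤ × ℤ)) (hF : CommFamily i F)
    (s t : ℤ) (hst : s ≤ t) :
    {y : ℤ | (s, y) ∈ F ∧ y ≤ t}.Subsingleton ∨
    {x : ℤ | (x, t) ∈ F ∧ s ≤ x}.Subsingleton :=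
  fourboxes_general i F hF s t

end IBoxes
end

section
/- Let 𝔉 be a commuting family of i-boxes contained in a finite interval [a,b]. Then there exists an admissible chain of i-boxes with extent [a,b] such that every member of 𝔉 appears in the chain. -/
namespace IBoxes

variable {I : Type*}

/-! ### Auxiliary machinery for constructing the chain -/

section Construction

open Classical

/-- Choosing the left box at envelope `[lo,hi]` fails: some box of `F` starting at `lo`
is not of the form `[lo, hi(i lo)⁻]`. -/
def LFails (i : ℤ → I) (F : Set (ℤ × ℤ)) (lo hi : ℤ) : Prop :=
  ∃ y, (lo, y) ∈ F ∧ ∃ t, y < t ∧ t ≤ hi ∧ i t = i lo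

/-- `r = lo(i hi)⁺` within `[lo,hi]`. -/
def RSpec (i : ℤ → I) (lo hi r : ℤ) : Prop :=
  lo ≤ r ∧ r ≤ hi ∧ i r = i hi ∧ ∀ t, lo ≤ t → t < r → i t ≠ i hi

/-- `m = hi(i lo)⁻` within `[lo,hi]`. -/
def LSpec (i : ℤ → I) (lo hi m : ℤ) : Prop :=
  lo ≤ m ∧ m ≤ hi ∧ i m = i lo ∧ ∀ t, m < t → t ≤ hi → i t ≠ i lo

lemma rspec_exists (i : ℤ → I) {lo hi : ℤ} (h : lo ≤ hi) : ∃ r, RSpec i lo hi r := by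
  obtain ⟨r, ⟨hr1, hr2, hr3⟩, hmin⟩ :=
    Int.exists_least_of_bdd (P := fun r => lo ≤ r ∧ r ≤ hi ∧ i r = i hi)
      ⟨lo, fun z hz => hz.1⟩ ⟨hi, h, le_refl _, rfl⟩
  exact ⟨r, hr1, hr2, hr3, fun t ht1 ht2 hc =>
    absurd (hmin t ⟨ht1, le_trans ht2.le hr2, hc⟩) (not_le.mpr ht2)⟩

lemma lspec_exists (i : ℤ → I) {lo hi : ℤ} (h : lo ≤ hi) : ∃ m, LSpec i lo hi m := by
  obtain ⟨r, ⟨hr1, hr2, hr3⟩, hmax⟩ :=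
    Int.exists_greatest_of_bdd (P := fun r => lo ≤ r ∧ r ≤ hi ∧ i r = i lo)
      ⟨hi, fun z hz => hz.2.1⟩ ⟨lo, le_refl _, h, rfl⟩
  exact ⟨r, hr1, hr2, hr3, fun t ht1 ht2 hc =>
    absurd (hmax t ⟨le_trans hr1 ht1.le, ht2, hc⟩) (not_le.mpr ht1)⟩

lemma RSpec_unique {i : ℤ → I} {lo hi r₁ r₂ : ℤ} (h1 : RSpec i lo hi r₁)
    (h2 : RSpec i lo hi r₂) : r₁ = r₂ := by
  rcases lt_trichotomy r₁ r₂ with h | h | h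
  · exact absurd h1.2.2.1 (h2.2.2.2 r₁ h1.1 h)
  · exact h
  · exact absurd h2.2.2.1 (h1.2.2.2 r₂ h2.1 h)

lemma LSpec_unique {i : ℤ → I} {lo hi r₁ r₂ : ℤ} (h1 : LSpec i lo hi r₁)
    (h2 : LSpec i lo hi r₂) : r₁ = r₂ := by
  rcases lt_trichotomy r₁ r₂ with h | h | h
  · exact absurd h2.2.2.1 (h1.2.2.2 r₂ h h2.2.1)
  · exact h
  · exact absurd h1.2.2.1 (h2.2.2.2 r₁ h h1.2.1)

noncomputable def rend (i : ℤ → I) (lo hi : ℤ) : ℤ :=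
  if h : ∃ r, RSpec i lo hi r then h.choose else lo

noncomputable def lend (i : ℤ → I) (lo hi : ℤ) : ℤ :=
  if h : ∃ m, LSpec i lo hi m then h.choose else lo

lemma rend_spec (i : ℤ → I) {lo hi : ℤ} (h : lo ≤ hi) : RSpec i lo hi (rend i lo hi) := by
  have he := rspec_exists i h
  simp only [rend, dif_pos he]
  exact he.choose_spec

lemma lend_spec (i : ℤ → I) {lo hi : ℤ} (h : lo ≤ hi) : LSpec i lo hi (lend i lo hi) := by
  have he := lspec_exists i h
  simp only [lend, dif_pos he]
  exact he.choose_spec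

/-- The box chosen at envelope `e`. -/
noncomputable def bChoice (i : ℤ → I) (F : Set (ℤ × ℤ)) (e : ℤ × ℤ) : ℤ × ℤ :=
  if LFails i F e.1 e.2 then (rend i e.1 e.2, e.2) else (e.1, lend i e.1 e.2)

/-- The envelopes, from the top down: `Env 0 = (a,b)` and each step shrinks by one. -/
noncomputable def Env (i : ℤ → I) (F : Set (ℤ × ℤ)) (a b : ℤ) : ℕ → ℤ × ℤ
  | 0 => (a, b)
  | m + 1 =>
      if LFails i F (Env i F a b m).1 (Env i F a b m).2 then
        ((Env i F a b m).1, (Env i F a b m).2 - 1)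
      else
        ((Env i F a b m).1 + 1, (Env i F a b m).2)

lemma Env_succ (i : ℤ → I) (F : Set (ℤ × ℤ)) (a b : ℤ) (m : ℕ) :
    Env i F a b (m + 1) =
      if LFails i F (Env i F a b m).1 (Env i F a b m).2 then
        ((Env i F a b m).1, (Env i F a b m).2 - 1)
      else
        ((Env i F a b m).1 + 1, (Env i F a b m).2) := rfl

lemma Env_width (i : ℤ → I) (F : Set (ℤ × ℤ)) (a b : ℤ) :
    ∀ m : ℕ, (Env i F a b m).2 - (Env i F a b m).1 = b - a - m
  | 0 => by simp [Env]
  | m + 1 => by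
      have ih := Env_width i F a b m
      rw [Env_succ]
      split <;> simp only [] <;> push_cast <;> omega

/-- The key commutation argument: if choosing the left box fails, then any box of `F`
ending at `hi` has no earlier occurrence of its color in `[lo, hi]`. -/
lemma key_commute {i : ℤ → I} {F : Set (ℤ × ℤ)} (hF : CommFamily i F) {lo hi : ℤ}
    (hL : LFails i F lo hi) {x : ℤ} (hx : (x, hi) ∈ F) {s : ℤ} (hs1 : lo ≤ s)
    (hs2 : s < x) : i s ≠ i hi := by
  obtain ⟨y, hyF, t, hty, hthi, hcol⟩ := hL
  have hybox := hF.1 _ hyF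
  have hxbox := hF.1 _ hx
  rcases hF.2 _ hyF _ hx with ⟨_, hga⟩ | ⟨hgb, _⟩
  · exact absurd (hcol.trans hybox.2) (hga t hty hthi)
  · exact fun hc => hgb s hs1 hs2 (hc.trans hxbox.2.symm)

/-- Every box of `F` inside the envelope at stage `m` equals the chosen box at some later
stage (where it is still inside the envelope). -/
lemma bChoice_reaches {i : ℤ → I} {F : Set (ℤ × ℤ)} (hF : CommFamily i F) (a b : ℤ) :
    ∀ n : ℕ, ∀ m : ℕ, (Env i F a b m).2 - (Env i F a b m).1 = (n : ℤ) →
      ∀ p ∈ F, (Env i F a b m).1 ≤ p.1 → p.2 ≤ (Env i F a b m).2 →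
      ∃ m', m ≤ m' ∧ bChoice i F (Env i F a b m') = p ∧
        (Env i F a b m').1 ≤ p.1 ∧ p.2 ≤ (Env i F a b m').2 := by
  intro n
  induction n with
  | zero =>
      intro m hw p hp h1 h2
      have hbox := hF.1 p hp
      have hple : p.1 ≤ p.2 := hbox.1
      refine ⟨m, le_refl _, ?_, h1, h2⟩
      have hle : (Env i F a b m).1 ≤ (Env i F a b m).2 := by omega
      unfold bChoice
      split
      · have hr := rend_spec i hle
        have : rend i (Env i F a b m).1 (Env i F a b m).2 = p.1 := by
          obtain ⟨a1, a2, _, _⟩ := hr; omega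
        rw [this]
        have : (Env i F a b m).2 = p.2 := by omega
        rw [this]
      · have hr := lend_spec i hle
        have h2' : lend i (Env i F a b m).1 (Env i F a b m).2 = p.2 := by
          obtain ⟨a1, a2, _, _⟩ := hr; omega
        rw [h2']
        have : (Env i F a b m).1 = p.1 := by omega
        rw [this]
  | succ n ih =>
      intro m hw p hp h1 h2
      have hbox := hF.1 p hp
      have hple : p.1 ≤ p.2 := hbox.1
      have hle : (Env i F a b m).1 ≤ (Env i F a b m).2 := by
        push_cast at hw; omega
      by_cases hLF : LFails i F (Env i F a b m).1 (Env i F a b m).2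
      · have hstep : Env i F a b (m + 1) =
            ((Env i F a b m).1, (Env i F a b m).2 - 1) := by
          rw [Env_succ, if_pos hLF]
        by_cases hp2 : p.2 ≤ (Env i F a b m).2 - 1
        · obtain ⟨m', hm', hb, hc1, hc2⟩ := ih (m + 1)
            (by rw [hstep]; push_cast at hw ⊢; omega) p hp
            (by rw [hstep]; exact h1) (by rw [hstep]; exact hp2)
          exact ⟨m', by omega, hb, hc1, hc2⟩
        · have hp2' : p.2 = (Env i F a b m).2 := by omega
          refine ⟨m, le_refl _, ?_, h1, h2⟩
          have hr := rend_spec i hle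
          have hxF : (p.1, (Env i F a b m).2) ∈ F := by rw [← hp2']; exact hp
          have hPs : RSpec i (Env i F a b m).1 (Env i F a b m).2 p.1 :=
            ⟨h1, by omega, by rw [← hp2']; exact hbox.2,
              fun s hs1 hs2 => key_commute hF hLF hxF hs1 hs2⟩
          have heq := RSpec_unique hr hPs
          unfold bChoice
          rw [if_pos hLF, heq, ← hp2']
      · have hstep : Env i F a b (m + 1) =
            ((Env i F a b m).1 + 1, (Env i F a b m).2) := by
          rw [Env_succ, if_neg hLF]
        by_cases hp1 : (Env i F a b m).1 + 1 ≤ p.1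
        · obtain ⟨m', hm', hb, hc1, hc2⟩ := ih (m + 1)
            (by rw [hstep]; push_cast at hw ⊢; omega) p hp
            (by rw [hstep]; exact hp1) (by rw [hstep]; exact h2)
          exact ⟨m', by omega, hb, hc1, hc2⟩
        · have hp1' : p.1 = (Env i F a b m).1 := by omega
          refine ⟨m, le_refl _, ?_, h1, h2⟩
          have hr := lend_spec i hle
          have hxF : ((Env i F a b m).1, p.2) ∈ F := by rw [← hp1']; exact hp
          have hPs : LSpec i (Env i F a b m).1 (Env i F a b m).2 p.2 :=
            ⟨by omega, h2, by rw [← hp1']; exact hbox.2.symm,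
              fun t ht1 ht2 hc => hLF ⟨p.2, hxF, t, ht1, ht2, hc⟩⟩
          have heq := LSpec_unique hr hPs
          unfold bChoice
          rw [if_neg hLF, heq, ← hp1']

end Construction

/-- Every commuting family of `i`-boxes in `[a,b]` is contained in the set of boxes of some
admissible chain with extent `[a,b]`. -/
theorem commFamily_subset_chain (i : ℤ → I) (a b : ℤ) (hab : a ≤ b)
    (F : Set (ℤ × ℤ)) (hF : CommFamily i F) (hrange : InRange a b F) :
    ∃ (l : ℕ) (C : AdmissibleChain i l), (l : ℤ) = b - a + 1 ∧
      C.lo l = a ∧ C.hi l = b ∧ F ⊆ boxesOf C := by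
  classical
  set l : ℕ := (b - a + 1).toNat with hl
  have hlz : (l : ℤ) = b - a + 1 := by rw [hl]; omega
  have hwidth : ∀ m : ℕ, (Env i F a b m).2 - (Env i F a b m).1 = b - a - m :=
    Env_width i F a b
  refine ⟨l, ⟨fun k => (Env i F a b (l - k)).1, fun k => (Env i F a b (l - k)).2,
    fun k => bChoice i F (Env i F a b (l - k)), ?_, ?_, ?_, ?_⟩, hlz, ?_, ?_, ?_⟩
  · -- size
    intro k hk1 hk2
    have hw := hwidth (l - k)
    omega
  · -- step
    intro k hk1 hk2
    have hsub : l - k = (l - (k + 1)) + 1 := by omega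
    have hE : Env i F a b (l - k) =
        if LFails i F (Env i F a b (l - (k+1))).1 (Env i F a b (l - (k+1))).2 then
          ((Env i F a b (l - (k+1))).1, (Env i F a b (l - (k+1))).2 - 1)
        else
          ((Env i F a b (l - (k+1))).1 + 1, (Env i F a b (l - (k+1))).2) := by
      rw [hsub, Env_succ]
    by_cases hLF : LFails i F (Env i F a b (l - (k+1))).1 (Env i F a b (l - (k+1))).2
    · right
      rw [hE, if_pos hLF]
      exact ⟨rfl, by ring⟩
    · left
      rw [hE, if_neg hLF]
      exact ⟨by ring, rfl⟩
  · -- box_spec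
    intro k hk1 hk2
    have hw := hwidth (l - k)
    have hle : (Env i F a b (l - k)).1 ≤ (Env i F a b (l - k)).2 := by omega
    by_cases hLF : LFails i F (Env i F a b (l - k)).1 (Env i F a b (l - k)).2
    · right
      have hr := rend_spec i hle
      unfold bChoice
      rw [if_pos hLF]
      exact ⟨rfl, hr.1, hr.2.1, hr.2.2.1, hr.2.2.2⟩
    · left
      have hr := lend_spec i hle
      unfold bChoice
      rw [if_neg hLF]
      exact ⟨rfl, hr.1, hr.2.1, hr.2.2.1, hr.2.2.2⟩
  · -- cover
    intro k hk1
    induction k, hk1 using Nat.le_induction with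
    | base =>
        intro hk2
        have hw := hwidth (l - 1)
        have hxx : (Env i F a b (l - 1)).2 = (Env i F a b (l - 1)).1 := by omega
        have hle : (Env i F a b (l - 1)).1 ≤ (Env i F a b (l - 1)).2 := by omega
        simp only [Set.Icc_self, Set.biUnion_singleton]
        unfold bChoice
        split
        · have hr := rend_spec i hle
          have h1 : rend i (Env i F a b (l - 1)).1 (Env i F a b (l - 1)).2 =
              (Env i F a b (l - 1)).1 := by obtain ⟨a1, a2, _, _⟩ := hr; omega
          rw [h1]
        · have hr := lend_spec i hle
          have h1 : lend i (Env i F a b (l - 1)).1 (Env i F a b (l - 1)).2 =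
              (Env i F a b (l - 1)).2 := by obtain ⟨a1, a2, _, _⟩ := hr; omega
          rw [h1]
    | succ k hk ih =>
        intro hk2
        beta_reduce
        beta_reduce at ih
        have hIcc : Set.Icc 1 (k + 1) = insert (k + 1) (Set.Icc 1 k) := by
          ext j; simp only [Set.mem_Icc, Set.mem_insert_iff]; omega
        rw [hIcc, Set.biUnion_insert, ← ih (by omega)]
        have hsub : l - k = (l - (k + 1)) + 1 := by omega
        have hE : Env i F a b (l - k) =
            if LFails i F (Env i F a b (l - (k+1))).1 (Env i F a b (l - (k+1))).2 then
              ((Env i F a b (l - (k+1))).1, (Env i F a b (l - (k+1))).2 - 1)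
            else
              ((Env i F a b (l - (k+1))).1 + 1, (Env i F a b (l - (k+1))).2) := by
          rw [hsub, Env_succ]
        have hw := hwidth (l - (k + 1))
        have hle : (Env i F a b (l - (k+1))).1 ≤ (Env i F a b (l - (k+1))).2 := by omega
        by_cases hLF : LFails i F (Env i F a b (l - (k+1))).1 (Env i F a b (l - (k+1))).2
        · have hr := rend_spec i hle
          rw [hE, if_pos hLF]
          simp only [bChoice, if_pos hLF]
          ext t
          simp only [Set.mem_Icc, Set.mem_union]
          obtain ⟨a1, a2, _, _⟩ := hr
          constructor
          · intro ht; omega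
          · intro ht; omega
        · have hr := lend_spec i hle
          rw [hE, if_neg hLF]
          simp only [bChoice, if_neg hLF]
          ext t
          simp only [Set.mem_Icc, Set.mem_union]
          obtain ⟨a1, a2, _, _⟩ := hr
          constructor
          · intro ht; omega
          · intro ht; omega
  · -- lo l = a
    show (Env i F a b (l - l)).1 = a
    rw [Nat.sub_self]; rfl
  · -- hi l = b
    show (Env i F a b (l - l)).2 = b
    rw [Nat.sub_self]; rfl
  · -- F ⊆ boxesOf
    intro p hp
    have hbox := hF.1 p hp
    have hple : p.1 ≤ p.2 := hbox.1
    have hr := hrange p hp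
    obtain ⟨m', hm0, hb, hc1, hc2⟩ := bChoice_reaches hF a b (b - a).toNat 0
      (by simp only [Env]; omega) p hp (by simpa [Env] using hr.1)
      (by simpa [Env] using hr.2)
    have hwm := hwidth m'
    have hm'le : m' ≤ l - 1 := by omega
    refine ⟨l - m', by omega, by omega, ?_⟩
    simp only []
    have : l - (l - m') = m' := by omega
    rw [this, hb]

end IBoxes
end

section
/- Let 𝔉 be a maximal commuting family of i-boxes in [a,b]. Then there exists an admissible chain of i-boxes (𝔠_k)_{1≤k≤l} with extent [a,b] such that 𝔉 = {𝔠_k : 1 ≤ k ≤ l}; in particular |𝔉| = b − a + 1. -/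
namespace IBoxes

variable {I : Type*}

lemma gapBelow_of_le {i : ℤ → I} {x m : ℤ} (h : x ≤ m) : gapBelow i x m := by
  intro t ht htx _
  omega

lemma gapAbove_of_le {i : ℤ → I} {y m : ℤ} (h : m ≤ y) : gapAbove i y m := by
  intro t hty htm _
  omega

lemma boxCommute_self (i : ℤ → I) (x y : ℤ) : BoxCommute i x y x y :=
  Or.inl ⟨gapBelow_of_le le_rfl, gapAbove_of_le le_rfl⟩

lemma boxCommute_symm {i : ℤ → I} {x1 y1 x2 y2 : ℤ}
    (h : BoxCommute i x1 y1 x2 y2) : BoxCommute i x2 y2 x1 y1 := h.symm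

lemma commFamily_insert {i : ℤ → I} {F : Set (ℤ × ℤ)} {c : ℤ × ℤ}
    (hF : CommFamily i F) (hc : IsBox i c.1 c.2)
    (hcomm : ∀ p ∈ F, BoxCommute i c.1 c.2 p.1 p.2) :
    CommFamily i (insert c F) := by
  constructor
  · intro p hp
    rcases Set.mem_insert_iff.mp hp with rfl | hp
    · exact hc
    · exact hF.1 p hp
  · intro p hp q hq
    rcases Set.mem_insert_iff.mp hp with hpc | hp <;>
      rcases Set.mem_insert_iff.mp hq with hqc | hq
    · rw [hpc, hqc]; exact boxCommute_self i c.1 c.2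
    · rw [hpc]; exact hcomm q hq
    · rw [hqc]; exact boxCommute_symm (hcomm p hp)
    · exact hF.2 p hp q hq

/-- The last occurrence of the color `i a` in `[a,b]`. -/
lemma exists_last (i : ℤ → I) {a b : ℤ} (hab : a ≤ b) :
    ∃ y, a ≤ y ∧ y ≤ b ∧ i y = i a ∧ ∀ t, y < t → t ≤ b → i t ≠ i a := by
  classical
  set s := (Finset.Icc a b).filter (fun t => i t = i a) with hs
  have hane : a ∈ s := by simp [hs, Finset.mem_filter, Finset.mem_Icc, hab]
  have hne : s.Nonempty := ⟨a, hane⟩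
  have hmem := s.max'_mem hne
  simp only [hs, Finset.mem_filter, Finset.mem_Icc] at hmem
  refine ⟨s.max' hne, hmem.1.1, hmem.1.2, hmem.2, ?_⟩
  intro t hlt hle hcol
  have hat : a ≤ t := le_trans (le_trans (s.le_max' a hane) hlt.le) le_rfl
  have htm : t ∈ s := by simp [hs, Finset.mem_filter, Finset.mem_Icc, hat, hle, hcol]
  exact absurd (s.le_max' t htm) (by omega)

/-- The first occurrence of the color `i b` in `[a,b]`. -/
lemma exists_first (i : ℤ → I) {a b : ℤ} (hab : a ≤ b) :
    ∃ x, a ≤ x ∧ x ≤ b ∧ i x = i b ∧ ∀ t, a ≤ t → t < x → i t ≠ i b := by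
  classical
  set s := (Finset.Icc a b).filter (fun t => i t = i b) with hs
  have hbne : b ∈ s := by simp [hs, Finset.mem_filter, Finset.mem_Icc, hab]
  have hne : s.Nonempty := ⟨b, hbne⟩
  have hmem := s.min'_mem hne
  simp only [hs, Finset.mem_filter, Finset.mem_Icc] at hmem
  refine ⟨s.min' hne, hmem.1.1, hmem.1.2, hmem.2, ?_⟩
  intro t hat hlt hcol
  have htb : t ≤ b := le_trans hlt.le (s.min'_le b hbne)
  have htm : t ∈ s := by simp [hs, Finset.mem_filter, Finset.mem_Icc, hat, htb, hcol]
  exact absurd (s.min'_le t htm) (by omega)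

/-- Extending an admissible chain by one more box. -/
lemma extend_chain (i : ℤ → I) {l' : ℕ} (hl' : 1 ≤ l') (C' : AdmissibleChain i l')
    (a b : ℤ) (c : ℤ × ℤ)
    (hstep : (a = C'.lo l' - 1 ∧ b = C'.hi l') ∨ (a = C'.lo l' ∧ b = C'.hi l' + 1))
    (hspec : IsLBox i a b c ∨ IsRBox i a b c)
    (hc1 : a ≤ c.1) (hc2 : c.2 ≤ b)
    (hcov : Set.Icc a b ⊆ Set.Icc (C'.lo l') (C'.hi l') ∪ Set.Icc c.1 c.2) :
    ∃ C : AdmissibleChain i (l' + 1), C.lo (l' + 1) = a ∧ C.hi (l' + 1) = b ∧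
      boxesOf C = insert c (boxesOf C') := by
  classical
  have hlohi : a ≤ C'.lo l' ∧ C'.hi l' ≤ b := by
    rcases hstep with ⟨ha, hb⟩ | ⟨ha, hb⟩ <;> constructor <;> omega
  refine ⟨⟨fun k => if k = l' + 1 then a else C'.lo k,
          fun k => if k = l' + 1 then b else C'.hi k,
          fun k => if k = l' + 1 then c else C'.box k, ?_, ?_, ?_, ?_⟩,
          by simp, by simp, ?_⟩
  · -- size
    intro k h1 h2
    by_cases hk : k = l' + 1
    · subst hk
      simp only [if_pos rfl]
      have hsz := C'.size l' hl' le_rfl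
      rcases hstep with ⟨ha, hb⟩ | ⟨ha, hb⟩ <;> push_cast <;> omega
    · have hk' : k ≤ l' := by omega
      simp only [if_neg hk]
      exact C'.size k h1 hk'
  · -- step
    intro k h1 hk
    by_cases hkl : k = l'
    · subst hkl
      have h1' : k ≠ k + 1 := by omega
      rcases hstep with ⟨ha, hb⟩ | ⟨ha, hb⟩
      · exact Or.inl ⟨by simp [h1', ha], by simp [h1', hb]⟩
      · exact Or.inr ⟨by simp [h1', ha], by simp [h1', hb]⟩
    · have hne1 : k ≠ l' + 1 := by omega
      have hne2 : k + 1 ≠ l' + 1 := by omega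
      simp only [if_neg hne1, if_neg hne2]
      exact C'.step k h1 (by omega)
  · -- box_spec
    intro k h1 h2
    by_cases hk : k = l' + 1
    · subst hk; simpa using hspec
    · have hk' : k ≤ l' := by omega
      simp only [if_neg hk]
      exact C'.box_spec k h1 hk'
  · -- cover
    intro k h1 h2
    by_cases hk : k = l' + 1
    · subst hk
      simp only [if_pos rfl]
      ext t
      simp only [Set.mem_Icc, Set.mem_iUnion, exists_prop]
      constructor
      · intro ht
        rcases hcov (Set.mem_Icc.mpr ht) with hmem | hmem
        · rw [C'.cover l' hl' le_rfl] at hmem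
          simp only [Set.mem_iUnion, Set.mem_Icc, exists_prop] at hmem
          obtain ⟨j, ⟨hj1, hj2⟩, hjt⟩ := hmem
          refine ⟨j, ⟨hj1, by omega⟩, ?_⟩
          rw [if_neg (by omega : j ≠ l' + 1)]
          exact hjt
        · refine ⟨l' + 1, ⟨by omega, le_rfl⟩, ?_⟩
          rw [if_pos rfl]
          exact Set.mem_Icc.mp hmem
      · rintro ⟨j, ⟨hj1, hj2⟩, hjt⟩
        by_cases hjl : j = l' + 1
        · subst hjl
          rw [if_pos rfl] at hjt
          exact ⟨le_trans hc1 hjt.1, le_trans hjt.2 hc2⟩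
        · rw [if_neg hjl] at hjt
          have hjle : j ≤ l' := by omega
          have : t ∈ Set.Icc (C'.lo l') (C'.hi l') := by
            rw [C'.cover l' hl' le_rfl]
            simp only [Set.mem_iUnion, Set.mem_Icc, exists_prop]
            exact ⟨j, ⟨hj1, hjle⟩, hjt⟩
          rw [Set.mem_Icc] at this
          exact ⟨le_trans hlohi.1 this.1, le_trans this.2 hlohi.2⟩
    · have hk' : k ≤ l' := by omega
      simp only [if_neg hk]
      rw [C'.cover k h1 hk']
      apply Set.iUnion₂_congr
      intro j hj
      rw [Set.mem_Icc] at hj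
      rw [if_neg (by omega : j ≠ l' + 1)]
  · -- boxesOf
    ext p
    simp only [boxesOf, Set.mem_setOf_eq, Set.mem_insert_iff]
    constructor
    · rintro ⟨k, hk1, hk2, hbox⟩
      by_cases hk : k = l' + 1
      · subst hk; rw [if_pos rfl] at hbox; exact Or.inl hbox.symm
      · exact Or.inr ⟨k, hk1, by omega, by rwa [if_neg hk] at hbox⟩
    · rintro (rfl | ⟨k, hk1, hk2, hbox⟩)
      · exact ⟨l' + 1, by omega, le_rfl, if_pos rfl⟩
      · exact ⟨k, hk1, by omega, by rw [if_neg (by omega : k ≠ l' + 1)]; exact hbox⟩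

lemma key_induction (i : ℤ → I) : ∀ n : ℕ, ∀ a b : ℤ, a ≤ b → (b - a).toNat = n →
    ∀ F : Set (ℤ × ℤ), MaxCommFamily i a b F →
    ∃ (l : ℕ) (C : AdmissibleChain i l), (l : ℤ) = b - a + 1 ∧
      C.lo l = a ∧ C.hi l = b ∧ boxesOf C = F ∧ F.Finite ∧ (F.ncard : ℤ) = b - a + 1 := by
  intro n
  induction n with
  | zero =>
    intro a b hab h0 F hF
    have hba : b = a := by omega
    subst hba
    have hFsub : F ⊆ {(b, b)} := by
      intro p hp
      obtain ⟨h1a, h1b⟩ := hF.1.1 p hp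
      obtain ⟨h2a, h2b⟩ := hF.2.1 p hp
      have hp1 : p.1 = b := by omega
      have hp2 : p.2 = b := by omega
      simp only [Set.mem_singleton_iff]
      exact Prod.ext hp1 hp2
    have hFeq : F = {(b, b)} := by
      apply hF.2.2 {(b, b)} ?_ ?_ hFsub
      · constructor
        · intro p hp
          rw [Set.mem_singleton_iff] at hp
          subst hp
          exact ⟨le_rfl, rfl⟩
        · intro p hp q hq
          rw [Set.mem_singleton_iff] at hp hq
          subst hp; subst hq
          exact boxCommute_self i b b
      · intro p hp
        rw [Set.mem_singleton_iff] at hp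
        subst hp
        exact ⟨le_rfl, le_rfl⟩
    refine ⟨1, ⟨fun _ => b, fun _ => b, fun _ => (b, b), ?_, ?_, ?_, ?_⟩,
      by omega, rfl, rfl, ?_, ?_, ?_⟩
    · intro k h1 h2
      have : k = 1 := by omega
      subst this
      push_cast
      ring
    · intro k h1 h2
      omega
    · intro k h1 h2
      refine Or.inl ⟨rfl, le_rfl, le_rfl, rfl, ?_⟩
      intro t ht1 ht2 _
      exact absurd (lt_of_lt_of_le ht1 ht2) (lt_irrefl b)
    · intro k h1 h2
      ext t
      simp only [Set.mem_Icc, Set.mem_iUnion, exists_prop]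
      constructor
      · intro ht
        exact ⟨1, ⟨le_rfl, h1⟩, ht.1, ht.2⟩
      · rintro ⟨j, _, hjt⟩
        exact hjt
    · rw [hFeq]
      ext p
      simp only [boxesOf, Set.mem_setOf_eq, Set.mem_singleton_iff]
      constructor
      · rintro ⟨k, _, _, hbox⟩
        exact hbox.symm
      · rintro rfl
        exact ⟨1, le_rfl, le_rfl, rfl⟩
    · rw [hFeq]; exact Set.finite_singleton _
    · rw [hFeq, Set.ncard_singleton]; omega
  | succ n ih =>
    intro a b hab hn F hF
    have hab' : a < b := by omega
    obtain ⟨ystar, hy1, hy2, hy3, hy4⟩ := exists_last i hab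
    obtain ⟨xstar, hx1, hx2, hx3, hx4⟩ := exists_first i hab
    -- the top-left corner box commutes with everything in range
    have hYcomm : ∀ x y : ℤ, a ≤ x → y ≤ b → BoxCommute i a ystar x y := by
      intro x y hx hy
      refine Or.inl ⟨gapBelow_of_le hx, ?_⟩
      intro t ht1 ht2
      rw [hy3]
      exact hy4 t ht1 (ht2.trans hy)
    have hXcomm : ∀ x y : ℤ, a ≤ x → y ≤ b → BoxCommute i xstar b x y := by
      intro x y hx hy
      refine Or.inl ⟨?_, gapAbove_of_le hy⟩
      intro t ht1 ht2
      rw [hx3]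
      exact hx4 t (hx.trans ht1) ht2
    have hYmem : (a, ystar) ∈ F := by
      have h := hF.2.2 (insert (a, ystar) F)
        (commFamily_insert hF.1 ⟨hy1, hy3.symm⟩
          (fun p hp => hYcomm p.1 p.2 (hF.2.1 p hp).1 (hF.2.1 p hp).2))
        ?_ (Set.subset_insert _ _)
      · rw [h]; exact Set.mem_insert _ _
      · intro p hp
        rcases Set.mem_insert_iff.mp hp with rfl | hp
        · exact ⟨le_rfl, hy2⟩
        · exact hF.2.1 p hp
    have hXmem : (xstar, b) ∈ F := by
      have h := hF.2.2 (insert (xstar, b) F)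
        (commFamily_insert hF.1 ⟨hx2, hx3⟩
          (fun p hp => hXcomm p.1 p.2 (hF.2.1 p hp).1 (hF.2.1 p hp).2))
        ?_ (Set.subset_insert _ _)
      · rw [h]; exact Set.mem_insert _ _
      · intro p hp
        rcases Set.mem_insert_iff.mp hp with rfl | hp
        · exact ⟨hx1, le_rfl⟩
        · exact hF.2.1 p hp
    -- dichotomy
    have hdich : (∀ p ∈ F, p.1 = a → p = (a, ystar)) ∨
        (∀ p ∈ F, p.2 = b → p = (xstar, b)) := by
      by_contra hcon
      push_neg at hcon
      obtain ⟨⟨p, hp, hp1, hpne⟩, ⟨q, hq, hq2, hqne⟩⟩ := hcon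
      have hpbox := hF.1.1 p hp
      have hqbox := hF.1.1 q hq
      have hprange := hF.2.1 p hp
      have hqrange := hF.2.1 q hq
      have hyne : p.2 ≠ ystar := fun h => hpne (Prod.ext hp1 h)
      have hxne : q.1 ≠ xstar := fun h => hqne (Prod.ext h hq2)
      have hpa : i p.2 = i a := by rw [← hpbox.2, hp1]
      have hqb : i q.1 = i b := by rw [hqbox.2, hq2]
      have hylt : p.2 < ystar := by
        rcases lt_or_ge p.2 ystar with h | h
        · exact h
        · exact absurd hpa (hy4 p.2 (by omega) hprange.2)
      have hxgt : xstar < q.1 := by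
        rcases lt_or_ge xstar q.1 with h | h
        · exact h
        · exact absurd hqb (hx4 q.1 hqrange.1 (by omega))
      rcases hF.1.2 p hp q hq with ⟨_, hga⟩ | ⟨hgb, _⟩
      · exact hga ystar hylt (by omega) (by rw [hy3, hpa])
      · exact hgb xstar (by omega) hxgt (by rw [hx3, hqb])
    rcases hdich with hA | hB
    · -- remove the box (a, ystar); rest is maximal in [a+1, b]
      set F' := F \ {(a, ystar)} with hF'def
      have hrange' : InRange (a + 1) b F' := by
        intro p hp
        have hr := hF.2.1 p hp.1
        have hne : p.1 ≠ a := by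
          intro h
          exact hp.2 (hA p hp.1 h)
        exact ⟨by omega, hr.2⟩
      have hmax' : MaxCommFamily i (a + 1) b F' := by
        refine ⟨⟨fun p hp => hF.1.1 p hp.1, fun p hp q hq => hF.1.2 p hp.1 q hq.1⟩,
          hrange', ?_⟩
        intro G hG hGrange hsub
        have hGcomm : CommFamily i (insert (a, ystar) G) :=
          commFamily_insert hG ⟨hy1, hy3.symm⟩
            (fun p hp => hYcomm p.1 p.2 (by have := (hGrange p hp).1; omega)
              (hGrange p hp).2)
        have hGrange' : InRange a b (insert (a, ystar) G) := by
          intro p hp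
          rcases Set.mem_insert_iff.mp hp with rfl | hp
          · exact ⟨le_rfl, hy2⟩
          · have := hGrange p hp
            exact ⟨by omega, this.2⟩
        have hFsub : F ⊆ insert (a, ystar) G := by
          intro p hp
          by_cases hpy : p = (a, ystar)
          · exact Or.inl hpy
          · exact Or.inr (hsub ⟨hp, hpy⟩)
        have hFeq := hF.2.2 _ hGcomm hGrange' hFsub
        apply Set.Subset.antisymm hsub
        intro q hq
        have hqF : q ∈ F := by rw [hFeq]; exact Set.mem_insert_iff.mpr (Or.inr hq)
        refine ⟨hqF, ?_⟩
        intro hqy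
        rw [Set.mem_singleton_iff] at hqy
        have := (hGrange q hq).1
        rw [hqy] at this
        omega
      obtain ⟨l', C', hl', hlo', hhi', hbox', hfin', hncard'⟩ :=
        ih (a + 1) b (by omega) (by omega) F' hmax'
      have hl'1 : 1 ≤ l' := by omega
      have hcov : Set.Icc a b ⊆ Set.Icc (C'.lo l') (C'.hi l') ∪
          Set.Icc (a, ystar).1 (a, ystar).2 := by
        intro t ht
        rw [Set.mem_Icc] at ht
        rcases le_or_gt (a + 1) t with h | h
        · left; rw [hlo', hhi', Set.mem_Icc]; exact ⟨h, ht.2⟩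
        · right; rw [Set.mem_Icc]; constructor <;> omega
      obtain ⟨C, hClo, hChi, hCbox⟩ := extend_chain i hl'1 C' a b (a, ystar)
        (Or.inl ⟨by omega, hhi'.symm⟩)
        (Or.inl ⟨rfl, hy1, hy2, hy3, hy4⟩)
        le_rfl hy2 hcov
      have hFins : insert (a, ystar) F' = F := by
        rw [hF'def, Set.insert_diff_singleton, Set.insert_eq_self.mpr hYmem]
      have hnm : (a, ystar) ∉ F' := by simp [hF'def]
      refine ⟨l' + 1, C, by push_cast; omega, hClo, hChi, ?_, ?_, ?_⟩
      · rw [hCbox, hbox', hFins]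
      · rw [← hFins]; exact hfin'.insert _
      · rw [← hFins, Set.ncard_insert_of_notMem hnm hfin']
        push_cast
        omega
    · -- remove the box (xstar, b); rest is maximal in [a, b-1]
      set F' := F \ {(xstar, b)} with hF'def
      have hrange' : InRange a (b - 1) F' := by
        intro p hp
        have hr := hF.2.1 p hp.1
        have hne : p.2 ≠ b := by
          intro h
          exact hp.2 (hB p hp.1 h)
        exact ⟨hr.1, by omega⟩
      have hmax' : MaxCommFamily i a (b - 1) F' := by
        refine ⟨⟨fun p hp => hF.1.1 p hp.1, fun p hp q hq => hF.1.2 p hp.1 q hq.1⟩,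
          hrange', ?_⟩
        intro G hG hGrange hsub
        have hGcomm : CommFamily i (insert (xstar, b) G) :=
          commFamily_insert hG ⟨hx2, hx3⟩
            (fun p hp => hXcomm p.1 p.2 (hGrange p hp).1
              (by have := (hGrange p hp).2; omega))
        have hGrange' : InRange a b (insert (xstar, b) G) := by
          intro p hp
          rcases Set.mem_insert_iff.mp hp with rfl | hp
          · exact ⟨hx1, le_rfl⟩
          · have := hGrange p hp
            exact ⟨this.1, by omega⟩
        have hFsub : F ⊆ insert (xstar, b) G := by
          intro p hp
          by_cases hpy : p = (xstar, b)
          · exact Or.inl hpy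
          · exact Or.inr (hsub ⟨hp, hpy⟩)
        have hFeq := hF.2.2 _ hGcomm hGrange' hFsub
        apply Set.Subset.antisymm hsub
        intro q hq
        have hqF : q ∈ F := by rw [hFeq]; exact Set.mem_insert_iff.mpr (Or.inr hq)
        refine ⟨hqF, ?_⟩
        intro hqy
        rw [Set.mem_singleton_iff] at hqy
        have := (hGrange q hq).2
        rw [hqy] at this
        omega
      obtain ⟨l', C', hl', hlo', hhi', hbox', hfin', hncard'⟩ :=
        ih a (b - 1) (by omega) (by omega) F' hmax'
      have hl'1 : 1 ≤ l' := by omega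
      have hcov : Set.Icc a b ⊆ Set.Icc (C'.lo l') (C'.hi l') ∪
          Set.Icc (xstar, b).1 (xstar, b).2 := by
        intro t ht
        rw [Set.mem_Icc] at ht
        rcases le_or_gt t (b - 1) with h | h
        · left; rw [hlo', hhi', Set.mem_Icc]; exact ⟨ht.1, h⟩
        · right; rw [Set.mem_Icc]; constructor <;> omega
      obtain ⟨C, hClo, hChi, hCbox⟩ := extend_chain i hl'1 C' a b (xstar, b)
        (Or.inr ⟨hlo'.symm, by omega⟩)
        (Or.inr ⟨rfl, hx1, hx2, hx3, hx4⟩)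
        hx1 le_rfl hcov
      have hFins : insert (xstar, b) F' = F := by
        rw [hF'def, Set.insert_diff_singleton, Set.insert_eq_self.mpr hXmem]
      have hnm : (xstar, b) ∉ F' := by simp [hF'def]
      refine ⟨l' + 1, C, by push_cast; omega, hClo, hChi, ?_, ?_, ?_⟩
      · rw [hCbox, hbox', hFins]
      · rw [← hFins]; exact hfin'.insert _
      · rw [← hFins, Set.ncard_insert_of_notMem hnm hfin']
        push_cast
        omega

/-- Every maximal commuting family of `i`-boxes in `[a,b]` is the set of boxes of an admissible
chain with extent `[a,b]`; in particular it has `b - a + 1` elements. -/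
theorem maxCommFamily_eq_chain (i : ℤ → I) (a b : ℤ) (hab : a ≤ b)
    (F : Set (ℤ × ℤ)) (hF : MaxCommFamily i a b F) :
    (∃ (l : ℕ) (C : AdmissibleChain i l), (l : ℤ) = b - a + 1 ∧
      C.lo l = a ∧ C.hi l = b ∧ boxesOf C = F) ∧
    (F.ncard : ℤ) = b - a + 1 := by
  obtain ⟨l, C, h1, h2, h3, h4, hfin, h5⟩ :=
    key_induction i ((b - a).toNat) a b hab rfl F hF
  exact ⟨⟨l, C, h1, h2, h3, h4⟩, h5⟩

end IBoxes
end

section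
/- Let (𝔠_k)_{1≤k≤l} be an admissible chain of i-boxes with 𝔠_k = [x_k,y_k] and envelopes 𝔠̃_k = [x̃_k, ỹ_k]. Then (x_k)₋ < x̃_k ≤ x_k ≤ y_k ≤ ỹ_k < (y_k)₊ for all k, and (x_k)₋ < x_j ≤ y_j < (y_k)₊ for all 1 ≤ j ≤ k ≤ l. In particular, any two i-boxes in the chain commute. -/
namespace IBoxes

variable {I : Type*}

/-- In an admissible chain: `(x_k)₋ < x̃_k ≤ x_k ≤ y_k ≤ ỹ_k < (y_k)₊`, and
`(x_k)₋ < x_j ≤ y_j < (y_k)₊` for `j ≤ k`; in particular any two boxes in the chain commute. -/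
theorem adch_commute {l : ℕ} (i : ℤ → I) (C : AdmissibleChain i l) :
    (∀ k : ℕ, 1 ≤ k → k ≤ l →
      gapBelow i (C.box k).1 (C.lo k) ∧ C.lo k ≤ (C.box k).1 ∧
      (C.box k).1 ≤ (C.box k).2 ∧ (C.box k).2 ≤ C.hi k ∧
      gapAbove i (C.box k).2 (C.hi k)) ∧
    (∀ j k : ℕ, 1 ≤ j → j ≤ k → k ≤ l →
      gapBelow i (C.box k).1 (C.box j).1 ∧ (C.box j).1 ≤ (C.box j).2 ∧
      gapAbove i (C.box k).2 (C.box j).2) ∧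
    (∀ j k : ℕ, 1 ≤ j → j ≤ l → 1 ≤ k → k ≤ l →
      BoxCommute i (C.box j).1 (C.box j).2 (C.box k).1 (C.box k).2) := by
  have h1 : ∀ k : ℕ, 1 ≤ k → k ≤ l →
      gapBelow i (C.box k).1 (C.lo k) ∧ C.lo k ≤ (C.box k).1 ∧
      (C.box k).1 ≤ (C.box k).2 ∧ (C.box k).2 ≤ C.hi k ∧
      gapAbove i (C.box k).2 (C.hi k) := by
    intro k hk1 hkl
    rcases C.box_spec k hk1 hkl with h | h
    · obtain ⟨hx, hlo, hhi, hcol, hgap⟩ := h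
      refine ⟨?_, le_of_eq hx.symm, ?_, hhi, ?_⟩
      · intro t ht1 ht2; exfalso; omega
      · omega
      · intro t ht1 ht2 hc
        exact hgap t ht1 ht2 (hc.trans hcol)
    · obtain ⟨hy, hlo, hhi, hcol, hgap⟩ := h
      refine ⟨?_, hlo, ?_, le_of_eq hy, ?_⟩
      · intro t ht1 ht2 hc
        exact hgap t ht1 ht2 (hc.trans hcol)
      · omega
      · intro t ht1 ht2; exfalso; omega
  have henv : ∀ j k : ℕ, 1 ≤ j → j ≤ k → k ≤ l →
      C.lo k ≤ (C.box j).1 ∧ (C.box j).2 ≤ C.hi k := by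
    intro j k hj1 hjk hkl
    have hcov := C.cover k (hj1.trans hjk) hkl
    have hjj := (h1 j hj1 (hjk.trans hkl)).2.2.1
    have hjmem : j ∈ Set.Icc 1 k := Set.mem_Icc.mpr ⟨hj1, hjk⟩
    have hx : (C.box j).1 ∈ Set.Icc (C.lo k) (C.hi k) := by
      rw [hcov]
      exact Set.mem_biUnion hjmem (Set.mem_Icc.mpr ⟨le_refl _, hjj⟩)
    have hy : (C.box j).2 ∈ Set.Icc (C.lo k) (C.hi k) := by
      rw [hcov]
      exact Set.mem_biUnion hjmem (Set.mem_Icc.mpr ⟨hjj, le_refl _⟩)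
    exact ⟨hx.1, hy.2⟩
  have h2 : ∀ j k : ℕ, 1 ≤ j → j ≤ k → k ≤ l →
      gapBelow i (C.box k).1 (C.box j).1 ∧ (C.box j).1 ≤ (C.box j).2 ∧
      gapAbove i (C.box k).2 (C.box j).2 := by
    intro j k hj1 hjk hkl
    obtain ⟨hlo, hhi⟩ := henv j k hj1 hjk hkl
    obtain ⟨gb, _, _, _, ga⟩ := h1 k (hj1.trans hjk) hkl
    exact ⟨fun t ht1 ht2 => gb t (hlo.trans ht1) ht2,
      (h1 j hj1 (hjk.trans hkl)).2.2.1,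
      fun t ht1 ht2 => ga t ht1 (ht2.trans hhi)⟩
  refine ⟨h1, h2, ?_⟩
  intro j k hj1 hjl hk1 hkl
  rcases le_total j k with h | h
  · exact Or.inr ⟨(h2 j k hj1 h hkl).1, (h2 j k hj1 h hkl).2.2⟩
  · exact Or.inl ⟨(h2 k j hk1 h hjl).1, (h2 k j hk1 h hjl).2.2⟩

end IBoxes
end
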